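/- arXiv:math/0604324 — 3 statements merged into one kernel-verified Lean document; each statement's English description precedes it below -/
import Mathlib

section
/- For every 0 < a < 1 and every natural number m, the infimum over all real polynomials p of degree at most 2m+1 of sup_{x ∈ X(a)} |p(x) − sgn(x)| equals the infimum over all real polynomials q of degree at most m of sup_{x ∈ [a²,1]} √x · |q(x) − 1/√x|. (The correspondence is p(x) = x·q(x²).) -/
open Filter Set

/-- The set `X(a) = [-1,-a] ∪ [a,1]`. -/
def X (a : ℝ) : Set ℝ := Icc (-1) (-a) ∪ Icc a 1

open Polynomial Finset in
lemma aux_sum_two (n : ℕ) (f : ℕ → ℝ) :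
    ∑ j ∈ range (2*n), f j = ∑ i ∈ range n, (f (2*i) + f (2*i+1)) := by
  induction n with
  | zero => simp
  | succ k ih =>
    have : 2*(k+1) = (2*k) + 1 + 1 := by ring
    rw [this, Finset.sum_range_succ, Finset.sum_range_succ, ih, Finset.sum_range_succ]
    ring

open Polynomial Finset in
lemma aux_odd_part (p : ℝ[X]) (m : ℕ) (hp : p.natDegree ≤ 2*m+1) :
    ∃ q : ℝ[X], q.natDegree ≤ m ∧
      ∀ x : ℝ, x * q.eval (x^2) = (p.eval x - p.eval (-x))/2 := by
  refine ⟨∑ i ∈ range (m+1), C (p.coeff (2*i+1)) * Polynomial.X^i, ?_, ?_⟩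
  · refine Polynomial.natDegree_sum_le_of_forall_le _ _ fun i hi => ?_
    calc (C (p.coeff (2*i+1)) * Polynomial.X^i).natDegree ≤ 0 + i := by
          refine (Polynomial.natDegree_mul_le).trans ?_
          gcongr <;> simp [Polynomial.natDegree_C, Polynomial.natDegree_X_pow, le_refl]
      _ ≤ m := by simpa using Nat.lt_succ_iff.mp (Finset.mem_range.mp hi)
  · intro x
    have hev : ∀ y : ℝ, p.eval y = ∑ j ∈ range (2*(m+1)), p.coeff j * y^j := by
      intro y
      exact Polynomial.eval_eq_sum_range' (by omega) y
    rw [hev, hev, ← Finset.sum_sub_distrib, aux_sum_two, Finset.sum_div]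
    simp only [Polynomial.eval_finset_sum, Polynomial.eval_mul, Polynomial.eval_C,
      Polynomial.eval_pow, Polynomial.eval_X, Finset.mul_sum]
    refine Finset.sum_congr rfl fun i _ => ?_
    have h1 : (-x)^(2*i) = x^(2*i) := (even_two_mul i).neg_pow x
    have h2 : (-x)^(2*i+1) = -x^(2*i+1) := (Even.add_one (even_two_mul i)).neg_pow x
    rw [h1, h2]
    rw [show (x^2)^i = x^(2*i) by rw [← pow_mul, mul_comm]]
    ring

lemma aux_key (q : Polynomial ℝ) (u : ℝ) (hu : 0 < u) :
    Real.sqrt (u^2) * |q.eval (u^2) - 1/Real.sqrt (u^2)| = |u * q.eval (u^2) - 1| := by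
  rw [Real.sqrt_sq hu.le]
  rw [show u * q.eval (u^2) - 1 = u * (q.eval (u^2) - 1/u) by field_simp, abs_mul,
    abs_of_pos hu]

lemma aux_image_eq (a : ℝ) (ha0 : 0 < a) (q : Polynomial ℝ) :
    (fun x => |x * q.eval (x^2) - Real.sign x|) '' X a
      = (fun t => Real.sqrt t * |q.eval t - 1 / Real.sqrt t|) '' Icc (a^2) 1 := by
  ext y
  constructor
  · rintro ⟨x, hx | hx, rfl⟩
    · obtain ⟨hx1, hx2⟩ := hx
      have hxneg : x < 0 := lt_of_le_of_lt hx2 (by linarith)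
      have hu0 : 0 < -x := by linarith
      refine ⟨x^2, ⟨?_, ?_⟩, ?_⟩
      · calc a^2 ≤ (-x)^2 := by gcongr <;> linarith
          _ = x^2 := by ring
      · calc x^2 = (-x)^2 := by ring
          _ ≤ 1^2 := by gcongr <;> linarith
          _ = 1 := one_pow 2
      · show Real.sqrt (x^2) * |q.eval (x^2) - 1/Real.sqrt (x^2)| = |x * q.eval (x^2) - Real.sign x|
        have h2 : x^2 = (-x)^2 := by ring
        rw [h2, aux_key q (-x) hu0, Real.sign_of_neg hxneg]
        rw [show (-x) * q.eval ((-x)^2) - 1 = -(x * q.eval ((-x)^2) - (-1)) by ring, abs_neg]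
    · obtain ⟨hx1, hx2⟩ := hx
      have hx0 : 0 < x := lt_of_lt_of_le ha0 hx1
      refine ⟨x^2, ⟨by gcongr, by calc x^2 ≤ 1^2 := by gcongr <;> linarith
          _ = 1 := one_pow 2⟩, ?_⟩
      show Real.sqrt (x^2) * |q.eval (x^2) - 1/Real.sqrt (x^2)| = |x * q.eval (x^2) - Real.sign x|
      rw [aux_key q x hx0, Real.sign_of_pos hx0]
  · rintro ⟨t, ⟨ht1, ht2⟩, rfl⟩
    have ht0 : 0 < t := lt_of_lt_of_le (by positivity) ht1
    have hst : Real.sqrt t ^ 2 = t := Real.sq_sqrt ht0.le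
    have hs0 : 0 < Real.sqrt t := Real.sqrt_pos.mpr ht0
    refine ⟨Real.sqrt t, Or.inr ⟨?_, ?_⟩, ?_⟩
    · calc a = Real.sqrt (a^2) := (Real.sqrt_sq ha0.le).symm
        _ ≤ Real.sqrt t := Real.sqrt_le_sqrt ht1
    · calc Real.sqrt t ≤ Real.sqrt 1 := Real.sqrt_le_sqrt ht2
        _ = 1 := Real.sqrt_one
    · show |Real.sqrt t * q.eval (Real.sqrt t ^ 2) - Real.sign (Real.sqrt t)|
        = Real.sqrt t * |q.eval t - 1/Real.sqrt t|
      rw [Real.sign_of_pos hs0, ← aux_key q _ hs0, hst]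

lemma aux_bdd (a : ℝ) (ha0 : 0 < a) (p : Polynomial ℝ) :
    BddAbove ((fun x => |p.eval x - Real.sign x|) '' X a) := by
  rw [X, Set.image_union]
  apply BddAbove.union
  · have : (fun x => |p.eval x - Real.sign x|) '' Icc (-1 : ℝ) (-a)
        = (fun x => |p.eval x + 1|) '' Icc (-1 : ℝ) (-a) := by
      refine Set.image_congr fun x hx => ?_
      have : x < 0 := lt_of_le_of_lt hx.2 (by linarith)
      rw [Real.sign_of_neg this]; ring_nf
    rw [this]
    exact (isCompact_Icc.image ((p.continuous.add continuous_const).abs)).bddAbove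
  · have : (fun x => |p.eval x - Real.sign x|) '' Icc a 1
        = (fun x => |p.eval x - 1|) '' Icc a 1 := by
      refine Set.image_congr fun x hx => ?_
      rw [Real.sign_of_pos (lt_of_lt_of_le ha0 hx.1)]
    rw [this]
    exact (isCompact_Icc.image ((p.continuous.sub continuous_const).abs)).bddAbove

open Polynomial in
lemma aux_eval_XqX2 (q : ℝ[X]) (x : ℝ) :
    (Polynomial.X * q.comp (Polynomial.X ^ 2)).eval x = x * q.eval (x^2) := by
  simp [Polynomial.eval_comp]

open Polynomial in
lemma aux_deg_XqX2 (q : ℝ[X]) (m : ℕ) (hq : q.natDegree ≤ m) :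
    (Polynomial.X * q.comp (Polynomial.X ^ 2)).natDegree ≤ 2 * m + 1 := by
  refine Polynomial.natDegree_mul_le.trans ?_
  have : (q.comp (Polynomial.X ^ 2 : ℝ[X])).natDegree ≤ 2 * m := by
    rw [Polynomial.natDegree_comp, Polynomial.natDegree_X_pow]
    omega
  simp only [Polynomial.natDegree_X]
  omega

/-- The best approximation problem for `sgn(x)` on `X(a)` by polynomials of degree at most
`2m+1` is equivalent to the weighted approximation problem for `1/√x` on `[a²,1]` by
polynomials of degree at most `m`. -/
theorem sgn_approx_eq_weighted_approx (a : ℝ) (ha0 : 0 < a) (ha1 : a < 1) (m : ℕ) :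
    sInf { r | ∃ p : Polynomial ℝ, p.natDegree ≤ 2 * m + 1 ∧
        r = sSup ((fun x => |p.eval x - Real.sign x|) '' X a) } =
    sInf { r | ∃ q : Polynomial ℝ, q.natDegree ≤ m ∧
        r = sSup ((fun x => Real.sqrt x * |q.eval x - 1 / Real.sqrt x|) '' Icc (a ^ 2) 1) } := by
  set S1 := { r | ∃ p : Polynomial ℝ, p.natDegree ≤ 2 * m + 1 ∧
      r = sSup ((fun x => |p.eval x - Real.sign x|) '' X a) } with hS1
  set S2 := { r | ∃ q : Polynomial ℝ, q.natDegree ≤ m ∧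
      r = sSup ((fun x => Real.sqrt x * |q.eval x - 1 / Real.sqrt x|) '' Icc (a ^ 2) 1) } with hS2
  -- nonneg lower bounds
  have hS1lb : ∀ r ∈ S1, (0:ℝ) ≤ r := by
    rintro r ⟨p, _, rfl⟩
    exact Real.sSup_nonneg (by rintro y ⟨x, _, rfl⟩; positivity)
  have hS2lb : ∀ r ∈ S2, (0:ℝ) ≤ r := by
    rintro r ⟨q, _, rfl⟩
    refine Real.sSup_nonneg ?_
    rintro y ⟨t, _, rfl⟩
    positivity
  have hS1ne : S1.Nonempty := ⟨_, 0, by simp, rfl⟩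
  have hS2ne : S2.Nonempty := ⟨_, 0, by simp, rfl⟩
  -- for a polynomial q, the map to the first problem
  have hmap : ∀ q : Polynomial ℝ,
      sSup ((fun x => |(Polynomial.X * q.comp (Polynomial.X ^ 2)).eval x - Real.sign x|) '' X a)
        = sSup ((fun x => Real.sqrt x * |q.eval x - 1 / Real.sqrt x|) '' Icc (a ^ 2) 1) := by
    intro q
    congr 1
    simp only [aux_eval_XqX2]
    exact aux_image_eq a ha0 q
  apply le_antisymm
  · -- S2 ⊆ S1 (as values), so sInf S1 ≤ sInf S2
    refine csInf_le_csInf ⟨0, hS1lb⟩ hS2ne ?_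
    rintro r ⟨q, hq, rfl⟩
    exact ⟨Polynomial.X * q.comp (Polynomial.X ^ 2), aux_deg_XqX2 q m hq, (hmap q).symm⟩
  · refine le_csInf hS1ne ?_
    rintro r ⟨p, hp, rfl⟩
    obtain ⟨q, hqdeg, hqev⟩ := aux_odd_part p m hp
    have h1 : sInf S2 ≤
        sSup ((fun x => Real.sqrt x * |q.eval x - 1 / Real.sqrt x|) '' Icc (a ^ 2) 1) :=
      csInf_le ⟨0, hS2lb⟩ ⟨q, hqdeg, rfl⟩
    refine h1.trans ?_
    rw [← hmap q]
    -- now bound sSup of odd part by sSup of p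
    have hbddp := aux_bdd a ha0 p
    have hXane : (X a).Nonempty := ⟨a, Or.inr ⟨le_refl a, ha1.le⟩⟩
    refine csSup_le (hXane.image _) ?_
    rintro y ⟨x, hx, rfl⟩
    -- x ∈ X a, show |pd(x) - sign x| ≤ sSup
    have hxmem : -x ∈ X a := by
      rcases hx with h | h
      · exact Or.inr ⟨by linarith [h.2], by linarith [h.1]⟩
      · exact Or.inl ⟨by linarith [h.2], by linarith [h.1]⟩
    have hxne : x ≠ 0 := by
      rcases hx with h | h
      · have : x < 0 := lt_of_le_of_lt h.2 (by linarith); exact this.ne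
      · have : 0 < x := lt_of_lt_of_le ha0 h.1; exact this.ne'
    have hsgn : Real.sign (-x) = - Real.sign x := by
      rcases hxne.lt_or_gt with h | h
      · rw [Real.sign_of_neg h, Real.sign_of_pos (by linarith : (0:ℝ) < -x)]; ring
      · rw [Real.sign_of_pos h, Real.sign_of_neg (by linarith : -x < 0)]
    have hle1 : |p.eval x - Real.sign x| ≤ sSup ((fun x => |p.eval x - Real.sign x|) '' X a) :=
      le_csSup hbddp ⟨x, hx, rfl⟩
    have hle2 : |p.eval (-x) - Real.sign (-x)|
        ≤ sSup ((fun x => |p.eval x - Real.sign x|) '' X a) :=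
      le_csSup hbddp ⟨-x, hxmem, rfl⟩
    rw [hsgn] at hle2
    calc |(Polynomial.X * q.comp (Polynomial.X ^ 2)).eval x - Real.sign x|
        = |(p.eval x - Real.sign x) / 2 - (p.eval (-x) - (- Real.sign x)) / 2| := by
          rw [aux_eval_XqX2, hqev x]; ring_nf
      _ ≤ |(p.eval x - Real.sign x) / 2| + |(p.eval (-x) - (- Real.sign x)) / 2| :=
          abs_sub _ _
      _ = |p.eval x - Real.sign x| / 2 + |p.eval (-x) - (- Real.sign x)| / 2 := by
          rw [abs_div, abs_div]; norm_num
      _ ≤ _ := by linarith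
end

section
/- Let B > 0. Then the set of points z = x + iy with 0 ≤ x ≤ π, y > 0, Re(cos z) = cosh B, and Im(cos z) ≤ 0 equals the curve { arccos(cosh B / cosh t) + i·t : t ≥ B }. In other words, the component in the half-strip {z : Re z ∈ [0,π], Im z > 0} of the preimage under cos of the ray {w : Re w = cosh B, Im w ≤ 0} admits the parametrization γ_B = { arccos(cosh B / cosh t) + i·t : t ≥ B }. -/
open Set Real

/-!
Writing `z = x + i y`, one has `Re (cos z) = cos x · cosh y` and `Im (cos z) = -sin x · sinh y`.
On the half-strip `sin x ≥ 0` and `sinh y > 0`, so the sign condition on the imaginary part is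
automatic, and since `cos` is a bijection from `[0, π]` onto `[-1, 1]`, the equation
`cos x · cosh y = cosh B` says exactly that `cosh B ≤ cosh y`, i.e. `B ≤ y`, and
`x = arccos (cosh B / cosh y)`.
-/

namespace Complex

theorem cos_re (z : ℂ) : (cos z).re = Real.cos z.re * Real.cosh z.im := by
  rw [cos_eq]; simp [cos_ofReal_re, sin_ofReal_im, cosh_ofReal_im, sinh_ofReal_re]

theorem cos_im (z : ℂ) : (cos z).im = -(Real.sin z.re * Real.sinh z.im) := by
  rw [cos_eq]; simp [cos_ofReal_im, sin_ofReal_re, cosh_ofReal_re, sinh_ofReal_re]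

theorem cos_im_nonpos {z : ℂ} (hre₀ : 0 ≤ z.re) (hreπ : z.re ≤ π) (him : 0 ≤ z.im) :
    (cos z).im ≤ 0 := by
  rw [cos_im, neg_nonpos]
  exact mul_nonneg (sin_nonneg_of_nonneg_of_le_pi hre₀ hreπ) (Real.sinh_nonneg_iff.mpr him)

end Complex

theorem Real.cos_mul_cosh_eq_cosh_iff {B x y : ℝ} (hB : 0 ≤ B) (hy : 0 ≤ y) (hx₀ : 0 ≤ x)
    (hxπ : x ≤ π) : cos x * cosh y = cosh B ↔ B ≤ y ∧ x = arccos (cosh B / cosh y) := by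
  have hcosh_y : 0 < cosh y := cosh_pos y
  have hB_le_iff : cosh B ≤ cosh y ↔ B ≤ y := by
    rw [cosh_le_cosh, abs_of_nonneg hB, abs_of_nonneg hy]
  constructor
  · intro h
    refine ⟨hB_le_iff.mp ?_, ?_⟩
    · calc cosh B = cos x * cosh y := h.symm
        _ ≤ 1 * cosh y := by gcongr; exact cos_le_one x
        _ = cosh y := one_mul _
    · rw [← h, mul_div_cancel_right₀ _ hcosh_y.ne', arccos_cos hx₀ hxπ]
  · rintro ⟨hBy, rfl⟩
    have hratio_le : cosh B / cosh y ≤ 1 := (div_le_one hcosh_y).mpr (hB_le_iff.mpr hBy)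
    have hratio_pos : 0 < cosh B / cosh y := div_pos (cosh_pos B) hcosh_y
    rw [cos_arccos (by linarith) hratio_le, div_mul_cancel₀ _ hcosh_y.ne']

/-- Parametrization of the curve `γ_B`: the part of the preimage of the ray
`{w : Re w = cosh B, Im w ≤ 0}` under `cos` lying in the half-strip
`{z : Re z ∈ [0,π], Im z > 0}` is `{arccos(cosh B / cosh t) + i t : t ≥ B}`. -/
theorem gammaB_parametrization (B : ℝ) (hB : 0 < B) :
    {z : ℂ | 0 ≤ z.re ∧ z.re ≤ Real.pi ∧ 0 < z.im ∧
        (Complex.cos z).re = Real.cosh B ∧ (Complex.cos z).im ≤ 0} =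
      (fun t : ℝ => (Real.arccos (Real.cosh B / Real.cosh t) : ℂ) + (t : ℂ) * Complex.I)
        '' Ici B := by
  ext z
  constructor
  · rintro ⟨hre₀, hreπ, him, hcos_re, -⟩
    rw [Complex.cos_re, cos_mul_cosh_eq_cosh_iff hB.le him.le hre₀ hreπ] at hcos_re
    obtain ⟨hB_le, hre⟩ := hcos_re
    exact ⟨z.im, hB_le, Complex.ext (by simp [hre]) (by simp)⟩
  · rintro ⟨t, hBt, rfl⟩
    dsimp only
    set x := arccos (cosh B / cosh t)
    have hre : ((x : ℂ) + t * Complex.I).re = x := by simp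
    have him : ((x : ℂ) + t * Complex.I).im = t := by simp
    have hx₀ : 0 ≤ x := arccos_nonneg _
    have hxπ : x ≤ π := arccos_le_pi _
    have ht : 0 < t := hB.trans_le hBt
    have hcos_im := Complex.cos_im_nonpos (by rwa [hre]) (by rwa [hre]) (by rw [him]; exact ht.le)
    rw [mem_ofPred_eq, Complex.cos_re, hre, him]
    exact ⟨hx₀, hxπ, ht, (cos_mul_cosh_eq_cosh_iff hB.le ht.le hx₀ hxπ).mpr ⟨hBt, rfl⟩, hcos_im⟩
end

section
/- Let m be a natural number and let a ∈ (0,1) satisfy a = L_m(a). Then the polynomial p_m of degree at most 2m+1 of least uniform deviation from sgn on X(a) (i.e., the unique real polynomial with deg p_m ≤ 2m+1 and sup_{x ∈ X(a)} |p_m(x) − sgn(x)| = L_m(a)) is the unique real polynomial of degree at most 2m+1 minimizing 𝓛(sgn, p) over all real polynomials p of degree at most 2m+1. -/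
open Set

/-- The error of best uniform approximation of `sgn` on `X(a)` by real polynomials of
degree at most `2m+1`. -/
noncomputable def Lm (m : ℕ) (a : ℝ) : ℝ :=
  sInf { r | ∃ p : Polynomial ℝ, p.natDegree ≤ 2 * m + 1 ∧
    r = sSup ((fun x => |p.eval x - Real.sign x|) '' X a) }

/-- The Lévy-type distance on `[-1,1]`. -/
noncomputable def levy (f g : ℝ → ℝ) : ℝ :=
  sInf { h : ℝ | 0 < h ∧ ∀ x ∈ Icc (-1 : ℝ) 1, f (x - h) - h ≤ g x ∧ g x ≤ f (x + h) + h }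

noncomputable def errP (a : ℝ) (p : Polynomial ℝ) : ℝ :=
  sSup ((fun x => |p.eval x - Real.sign x|) '' X a)

lemma sign_right {a x : ℝ} (ha : 0 < a) (hx : x ∈ Icc a 1) : Real.sign x = 1 :=
  Real.sign_of_pos (lt_of_lt_of_le ha hx.1)

lemma sign_left {a x : ℝ} (ha : 0 < a) (hx : x ∈ Icc (-1 : ℝ) (-a)) : Real.sign x = -1 :=
  Real.sign_of_neg (lt_of_le_of_lt hx.2 (by linarith))

lemma exists_max {a : ℝ} (ha : 0 < a) (ha1 : a < 1) (p : Polynomial ℝ) :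
    ∃ x₀ ∈ X a, (∀ x ∈ X a, |p.eval x - Real.sign x| ≤ |p.eval x₀ - Real.sign x₀|) ∧
      errP a p = |p.eval x₀ - Real.sign x₀| := by
  obtain ⟨x₁, hx₁, hmax₁⟩ := (isCompact_Icc (a := a) (b := 1)).exists_isMaxOn
    (Set.nonempty_Icc.2 ha1.le) ((p.continuous.sub continuous_const).abs.continuousOn
      (f := fun x => |p.eval x - 1|))
  obtain ⟨x₂, hx₂, hmax₂⟩ := (isCompact_Icc (a := (-1:ℝ)) (b := -a)).exists_isMaxOn
    (Set.nonempty_Icc.2 (by linarith)) ((p.continuous.add continuous_const).abs.continuousOn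
      (f := fun x => |p.eval x + 1|))
  have key : ∀ x₀ ∈ X a, (∀ x ∈ X a, |p.eval x - Real.sign x| ≤ |p.eval x₀ - Real.sign x₀|) →
      ∃ x₀ ∈ X a, (∀ x ∈ X a, |p.eval x - Real.sign x| ≤ |p.eval x₀ - Real.sign x₀|) ∧
      errP a p = |p.eval x₀ - Real.sign x₀| := by
    intro x₀ hx₀ hmax
    refine ⟨x₀, hx₀, hmax, le_antisymm ?_ ?_⟩
    · unfold errP
      apply csSup_le ⟨_, Set.mem_image_of_mem (fun x => |p.eval x - Real.sign x|) hx₀⟩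
      rintro r ⟨x, hx, rfl⟩; exact hmax x hx
    · exact le_csSup ⟨_, by rintro r ⟨x, hx, rfl⟩; exact hmax x hx⟩
        (Set.mem_image_of_mem (fun x => |p.eval x - Real.sign x|) hx₀)
  have e₁ : ∀ x ∈ Icc a 1, p.eval x - Real.sign x = p.eval x - 1 := by
    intro x hx; rw [sign_right ha hx]
  have e₂ : ∀ x ∈ Icc (-1:ℝ) (-a), p.eval x - Real.sign x = p.eval x + 1 := by
    intro x hx; rw [sign_left ha hx]; ring
  rcases le_total (|p.eval x₂ + 1|) (|p.eval x₁ - 1|) with hc | hc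
  · refine key x₁ (Or.inr hx₁) ?_
    rintro x (hx | hx)
    · rw [e₂ x hx, e₁ x₁ hx₁]; exact (hmax₂ hx).trans hc
    · rw [e₁ x hx, e₁ x₁ hx₁]; exact hmax₁ hx
  · refine key x₂ (Or.inl hx₂) ?_
    rintro x (hx | hx)
    · rw [e₂ x hx, e₂ x₂ hx₂]; exact hmax₂ hx
    · rw [e₁ x hx, e₂ x₂ hx₂]; exact (hmax₁ hx).trans hc

lemma bddAbove_err {a : ℝ} (ha : 0 < a) (ha1 : a < 1) (p : Polynomial ℝ) :
    BddAbove ((fun x => |p.eval x - Real.sign x|) '' X a) := by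
  obtain ⟨x₀, hx₀, hmax, -⟩ := exists_max ha ha1 p
  exact ⟨_, by rintro r ⟨x, hx, rfl⟩; exact hmax x hx⟩

lemma le_err {a : ℝ} (ha : 0 < a) (ha1 : a < 1) (p : Polynomial ℝ) {x : ℝ} (hx : x ∈ X a) :
    |p.eval x - Real.sign x| ≤ errP a p :=
  le_csSup (bddAbove_err ha ha1 p) ⟨x, hx, rfl⟩

lemma err_le {a c : ℝ} (ha : 0 < a) (ha1 : a < 1) (p : Polynomial ℝ)
    (h : ∀ x ∈ X a, |p.eval x - Real.sign x| ≤ c) : errP a p ≤ c := by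
  unfold errP
  apply csSup_le ⟨_, Set.mem_image_of_mem (fun x => |p.eval x - Real.sign x|)
    (show a ∈ X a from Or.inr ⟨le_refl a, ha1.le⟩)⟩
  rintro r ⟨x, hx, rfl⟩; exact h x hx

lemma err_nonneg {a : ℝ} (ha : 0 < a) (ha1 : a < 1) (p : Polynomial ℝ) : 0 ≤ errP a p :=
  le_trans (abs_nonneg _) (le_err ha ha1 p (Or.inr ⟨le_refl a, ha1.le⟩))

lemma Lm_le {m : ℕ} {a : ℝ} (ha : 0 < a) (ha1 : a < 1) {p : Polynomial ℝ}
    (hdeg : p.natDegree ≤ 2 * m + 1) : Lm m a ≤ errP a p := by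
  apply csInf_le
  · refine ⟨0, ?_⟩
    rintro r ⟨p', hp', rfl⟩
    exact err_nonneg ha ha1 p'
  · exact ⟨p, hdeg, rfl⟩

lemma X_mono {h a : ℝ} (hha : h ≤ a) : X a ⊆ X h := by
  rintro x (hx | hx)
  · exact Or.inl ⟨hx.1, hx.2.trans (by linarith)⟩
  · exact Or.inr ⟨le_trans hha hx.1, hx.2⟩

lemma Lm_mono {m : ℕ} {h a : ℝ} (h0 : 0 < h) (hha : h ≤ a) (ha1 : a < 1) :
    Lm m a ≤ Lm m h := by
  have h1 : h < 1 := lt_of_le_of_lt hha ha1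
  apply le_csInf
  · exact ⟨_, 0, by simp, rfl⟩
  · rintro r ⟨p, hp, rfl⟩
    calc Lm m a ≤ errP a p := Lm_le (lt_of_lt_of_le h0 hha) ha1 hp
    _ ≤ _ := csSup_le_csSup (bddAbove_err h0 h1 p)
        ⟨_, Set.mem_image_of_mem (fun x => |p.eval x - Real.sign x|)
          (show a ∈ X a from Or.inr ⟨le_refl a, ha1.le⟩)⟩
        (Set.image_mono (X_mono hha))

def levySet (q : Polynomial ℝ) : Set ℝ :=
  { h : ℝ | 0 < h ∧ ∀ x ∈ Icc (-1 : ℝ) 1,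
      Real.sign (x - h) - h ≤ q.eval x ∧ q.eval x ≤ Real.sign (x + h) + h }

lemma levy_eq (q : Polynomial ℝ) : levy Real.sign (fun x => q.eval x) = sInf (levySet q) := rfl

lemma sign_mem (y : ℝ) : -1 ≤ Real.sign y ∧ Real.sign y ≤ 1 := by
  rcases lt_trichotomy y 0 with h | h | h
  · rw [Real.sign_of_neg h]; norm_num
  · rw [h, Real.sign_zero]; norm_num
  · rw [Real.sign_of_pos h]; norm_num

lemma levySet_nonempty (q : Polynomial ℝ) : (levySet q).Nonempty := by
  obtain ⟨x₀, hx₀, hmax⟩ := (isCompact_Icc (a := (-1:ℝ)) (b := 1)).exists_isMaxOn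
    (by norm_num) (q.continuous.abs.continuousOn (f := fun x => |q.eval x|))
  refine ⟨|q.eval x₀| + 2, by positivity, ?_⟩
  intro x hx
  obtain ⟨hl, hu⟩ := abs_le.1 (show |q.eval x| ≤ |q.eval x₀| from hmax hx)
  constructor
  · linarith [(sign_mem (x - (|q.eval x₀| + 2))).2]
  · linarith [(sign_mem (x + (|q.eval x₀| + 2))).1]

lemma bounds_of_levy_mem {q : Polynomial ℝ} {h : ℝ} (h0 : 0 < h) (h1 : h < 1)
    (hc : ∀ x ∈ Icc (-1 : ℝ) 1,
      Real.sign (x - h) - h ≤ q.eval x ∧ q.eval x ≤ Real.sign (x + h) + h) :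
    (∀ x ∈ Icc h 1, |q.eval x - 1| ≤ h) ∧ ∀ x ∈ Icc (-1 : ℝ) (-h), |q.eval x + 1| ≤ h := by
  constructor
  · have hsub : Ioc h 1 ⊆ {x : ℝ | |q.eval x - 1| ≤ h} := by
      intro x hx
      obtain ⟨hl, hu⟩ := hc x ⟨by linarith [hx.1], hx.2⟩
      rw [Real.sign_of_pos (by linarith [hx.1] : (0:ℝ) < x - h)] at hl
      rw [Real.sign_of_pos (by linarith [hx.1] : (0:ℝ) < x + h)] at hu
      simp only [mem_setOf_eq, abs_le]
      constructor <;> linarith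
    have hcl : IsClosed {x : ℝ | |q.eval x - 1| ≤ h} :=
      isClosed_le (q.continuous.sub continuous_const).abs continuous_const
    have hcc := closure_minimal hsub hcl
    rw [closure_Ioc (ne_of_lt h1)] at hcc
    intro x hx; exact hcc hx
  · have hsub : Ico (-1 : ℝ) (-h) ⊆ {x : ℝ | |q.eval x + 1| ≤ h} := by
      intro x hx
      obtain ⟨hl, hu⟩ := hc x ⟨hx.1, by linarith [hx.2]⟩
      rw [Real.sign_of_neg (by linarith [hx.2] : x - h < 0)] at hl
      rw [Real.sign_of_neg (by linarith [hx.2] : x + h < 0)] at hu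
      simp only [mem_setOf_eq, abs_le]
      constructor <;> linarith
    have hcl : IsClosed {x : ℝ | |q.eval x + 1| ≤ h} :=
      isClosed_le (q.continuous.add continuous_const).abs continuous_const
    have hcc := closure_minimal hsub hcl
    rw [closure_Ico (by intro hcon; have h2 := neg_injective hcon; linarith : (-1:ℝ) ≠ -h)] at hcc
    intro x hx; exact hcc hx

lemma err_le_of_levy_mem {q : Polynomial ℝ} {h : ℝ} (h0 : 0 < h) (h1 : h < 1)
    (hc : h ∈ levySet q) : errP h q ≤ h := by
  obtain ⟨hr, hl⟩ := bounds_of_levy_mem h0 h1 hc.2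
  apply err_le h0 h1
  rintro x (hx | hx)
  · rw [sign_left h0 hx]
    simpa using hl x hx
  · rw [sign_right h0 hx]
    exact hr x hx

lemma levy_lower {m : ℕ} {a : ℝ} (ha : 0 < a) (ha1 : a < 1) (hfix : a = Lm m a)
    {q : Polynomial ℝ} (hdeg : q.natDegree ≤ 2 * m + 1) :
    a ≤ sInf (levySet q) := by
  apply le_csInf (levySet_nonempty q)
  intro h hh
  by_contra hlt
  push_neg at hlt
  have h0 : 0 < h := hh.1
  have h1 : h < 1 := by linarith
  have he : errP h q ≤ h := err_le_of_levy_mem h0 h1 hh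
  have h2 : Lm m h ≤ errP h q := Lm_le h0 h1 hdeg
  have h3 : Lm m a ≤ Lm m h := Lm_mono h0 hlt.le ha1
  rw [← hfix] at h3
  linarith

lemma improve_aux {e w a M t : ℝ} (ha : 0 < a) (ha1 : a ≤ 1) (hM : 1 ≤ M) (hepos : 0 < e)
    (he : e ≤ a) (hw : w ≤ M) (hprod : a^2/2 < e * w) (ht : 0 < t) (htM : t * M^2 ≤ a^2/2) :
    |e - t * w| ≤ a - t * a / 2 := by
  have hw0 : 0 < w := by nlinarith
  have hwa : a/2 ≤ w := by nlinarith
  have htw : t * w ≤ t * M := by nlinarith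
  have hel : a^2/(2*M) < e := by
    rw [div_lt_iff₀ (by nlinarith)]; nlinarith
  have htM' : t * M ≤ a^2/(2*M) := by
    rw [le_div_iff₀ (by nlinarith)]; nlinarith
  have hta : t * a ≤ a := by nlinarith
  rw [abs_le]
  constructor <;> nlinarith

lemma improve {e w a M t : ℝ} (ha : 0 < a) (ha1 : a ≤ 1) (hM : 1 ≤ M) (he : |e| ≤ a)
    (hw : |w| ≤ M) (hprod : a^2/2 < e * w) (ht : 0 < t) (htM : t * M^2 ≤ a^2/2) :
    |e - t * w| ≤ a - t * a / 2 := by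
  obtain ⟨he1, he2⟩ := abs_le.1 he
  obtain ⟨hw1, hw2⟩ := abs_le.1 hw
  rcases lt_trichotomy e 0 with h | h | h
  · have := improve_aux (e := -e) (w := -w) ha ha1 hM (by linarith) (by linarith) (by linarith)
      (by nlinarith) ht htM
    rwa [show -e - t * -w = -(e - t * w) by ring, abs_neg] at this
  · exfalso; rw [h] at hprod; nlinarith
  · exact improve_aux ha ha1 hM h he2 hw2 hprod ht htM

set_option maxHeartbeats 1600000 in
lemma extremal_card_aux {m : ℕ} {a : ℝ} (ha : 0 < a) (ha1 : a < 1) (hLm : Lm m a = a)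
    {r : Polynomial ℝ} (hdeg : r.natDegree ≤ 2 * m + 1) (hbest : errP a r = a)
    (hE : {x ∈ X a | |r.eval x - Real.sign x| = a}.Finite)
    (hcard : {x ∈ X a | |r.eval x - Real.sign x| = a}.ncard ≤ 2 * m + 2) : False := by
  classical
  set E := {x ∈ X a | |r.eval x - Real.sign x| = a} with hEdef
  set F := hE.toFinset with hFdef
  have hFcard : F.card ≤ 2 * m + 2 := by
    rwa [← Set.ncard_eq_toFinset_card E hE]
  have hinj : Set.InjOn id (F : Set ℝ) := Function.injective_id.injOn
  obtain ⟨π, hπdeg, hπval⟩ : ∃ π : Polynomial ℝ, π.natDegree ≤ 2 * m + 1 ∧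
      ∀ x ∈ E, π.eval x = r.eval x - Real.sign x := by
    refine ⟨Lagrange.interpolate F id (fun x => r.eval x - Real.sign x), ?_, ?_⟩
    · set π := Lagrange.interpolate F id (fun x => r.eval x - Real.sign x) with hπdef
      by_cases hπ0 : π = 0
      · simp [hπ0]
      · have h1 := Lagrange.degree_interpolate_lt (fun x => r.eval x - Real.sign x) hinj
        have h2 : π.degree < ((2 * m + 2 : ℕ) : WithBot ℕ) :=
          lt_of_lt_of_le h1 (by exact_mod_cast hFcard)
        have := (Polynomial.natDegree_lt_iff_degree_lt hπ0).2 h2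
        omega
    · intro x hx
      have hxF : x ∈ F := (Set.Finite.mem_toFinset hE).2 hx
      exact Lagrange.eval_interpolate_at_node (fun x => r.eval x - Real.sign x) hinj hxF
  clear_value F
  clear hinj hFcard hFdef
  clear F
  clear_value E
  -- bound for π on X a
  have hXne : (X a).Nonempty := ⟨a, Or.inr ⟨le_refl a, ha1.le⟩⟩
  have hXcomp : IsCompact (X a) := isCompact_Icc.union isCompact_Icc
  obtain ⟨xM, hxM, hMmax⟩ := hXcomp.exists_isMaxOn hXne
    (π.continuous.abs.continuousOn (f := fun x => |π.eval x|))
  set M := max (|π.eval xM|) 1 with hMdef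
  have hM1 : (1:ℝ) ≤ M := le_max_right _ _
  have hM0 : (0:ℝ) < M := by linarith
  have hMb : ∀ x ∈ X a, |π.eval x| ≤ M := fun x hx =>
    le_trans (hMmax hx) (le_max_left _ _)
  -- pointwise error bound on X a
  have herr : ∀ x ∈ X a, |r.eval x - Real.sign x| ≤ a := by
    intro x hx; rw [← hbest]; exact le_err ha ha1 r hx
  -- sup over the "small product" sets
  have hKbound : ∀ (I : Set ℝ) (σ : ℝ), IsCompact I → I ⊆ X a →
      (∀ x ∈ I, r.eval x - Real.sign x = r.eval x - σ) →
      ∃ c, c < a ∧ ∀ x ∈ I, (r.eval x - σ) * π.eval x ≤ a^2/2 → |r.eval x - σ| ≤ c := by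
    intro I σ hIc hIX hIσ
    set K := I ∩ {x : ℝ | (r.eval x - σ) * π.eval x ≤ a^2/2} with hKdef
    have hKc : IsCompact K := hIc.inter_right
      (isClosed_le (((r.continuous.sub continuous_const).mul π.continuous)) continuous_const)
    rcases K.eq_empty_or_nonempty with hKe | hKne
    · refine ⟨0, ha, ?_⟩
      intro x hxI hxle
      exact absurd (show x ∈ K from ⟨hxI, hxle⟩) (by rw [hKe]; exact notMem_empty x)
    · obtain ⟨y, hy, hymax⟩ := hKc.exists_isMaxOn hKne
        ((r.continuous.sub continuous_const).abs.continuousOn (f := fun x => |r.eval x - σ|))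
      refine ⟨|r.eval y - σ|, ?_, fun x hxI hxle => hymax (⟨hxI, hxle⟩ : x ∈ K)⟩
      have hyX : y ∈ X a := hIX hy.1
      have hle : |r.eval y - σ| ≤ a := by
        rw [← hIσ y hy.1]; exact herr y hyX
      rcases lt_or_eq_of_le hle with h | h
      · exact h
      · exfalso
        have hyE : y ∈ E := by
          rw [hEdef]; exact ⟨hyX, by rw [hIσ y hy.1]; exact h⟩
        have := hπval y hyE
        rw [hIσ y hy.1] at this
        have h2 : (r.eval y - σ)^2 = a^2 := by rw [← sq_abs, h]
        have hsq : (r.eval y - σ) * π.eval y = a^2 := by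
          rw [this, ← sq, h2]
        have := hy.2
        rw [mem_setOf_eq, hsq] at this
        nlinarith
  obtain ⟨c₁, hc₁a, hc₁⟩ := hKbound (Icc a 1) 1 isCompact_Icc (fun x hx => Or.inr hx)
    (fun x hx => by rw [sign_right ha hx])
  obtain ⟨c₂, hc₂a, hc₂⟩ := hKbound (Icc (-1) (-a)) (-1) isCompact_Icc (fun x hx => Or.inl hx)
    (fun x hx => by rw [sign_left ha hx])
  set c := max c₁ c₂ with hcdef
  have hca : c < a := max_lt hc₁a hc₂a
  set t := min ((a - c)/(2*M)) (a^2/(2*M^2)) with htdef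
  have ht : 0 < t := lt_min (div_pos (by nlinarith) (by nlinarith)) (div_pos (by nlinarith) (by positivity))
  have hMne : M ≠ 0 := ne_of_gt hM0
  have htM : t * M^2 ≤ a^2/2 := by
    have h1 : t ≤ a^2/(2*M^2) := min_le_right _ _
    have h2 : (0:ℝ) < M^2 := by positivity
    have h3 : (a^2/(2*M^2)) * M^2 = a^2/2 := by field_simp
    nlinarith
  have htM2 : t * M ≤ (a - c)/2 := by
    have h1 : t ≤ (a - c)/(2*M) := min_le_left _ _
    have h3 : ((a - c)/(2*M)) * M = (a - c)/2 := by field_simp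
    nlinarith
  obtain ⟨r', hr'deg, hr'ev⟩ : ∃ r' : Polynomial ℝ, r'.natDegree ≤ 2 * m + 1 ∧
      ∀ x : ℝ, r'.eval x = r.eval x - t * π.eval x := by
    refine ⟨r - Polynomial.C t * π, ?_, ?_⟩
    · refine le_trans (Polynomial.natDegree_sub_le r _) (max_le hdeg ?_)
      exact le_trans (Polynomial.natDegree_C_mul_le t π) hπdeg
    · intro x; simp
  set β := max (c + t*M) (a - t*a/2) with hβdef
  have hβa : β < a := by
    apply max_lt
    · linarith
    · nlinarith
  have hcc₁ : c₁ ≤ c := le_max_left _ _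
  have hcc₂ : c₂ ≤ c := le_max_right _ _
  have hβ1 : c + t*M ≤ β := le_max_left _ _
  have hβ2 : a - t*a/2 ≤ β := le_max_right _ _
  clear_value M c t β
  have hpoint : ∀ x ∈ X a, |r'.eval x - Real.sign x| ≤ β := by
    intro x hx
    have hev : r'.eval x - Real.sign x = (r.eval x - Real.sign x) - t * π.eval x := by
      rw [hr'ev x]; ring
    have heb : |r.eval x - Real.sign x| ≤ a := herr x hx
    have hwb : |π.eval x| ≤ M := hMb x hx
    rcases hx with hxl | hxr
    · have hs : Real.sign x = -1 := sign_left ha hxl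
      rcases le_or_gt ((r.eval x - (-1)) * π.eval x) (a^2/2) with hle | hgt
      · have := hc₂ x hxl hle
        rw [hev, hs]
        calc |(r.eval x - (-1)) - t * π.eval x| ≤ |r.eval x - (-1)| + t * |π.eval x| := by
              have h4 := abs_sub (r.eval x - (-1)) (t * π.eval x)
              rw [abs_mul, abs_of_pos ht] at h4; exact h4
        _ ≤ c + t * M := by
              nlinarith [abs_nonneg (π.eval x)]
        _ ≤ β := hβ1
      · rw [hev, hs]
        refine le_trans (improve ha ha1.le hM1 ?_ hwb hgt ht htM) (le_trans (by nlinarith) hβ2)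
        rw [← hs]; exact heb
    · have hs : Real.sign x = 1 := sign_right ha hxr
      rcases le_or_gt ((r.eval x - 1) * π.eval x) (a^2/2) with hle | hgt
      · have := hc₁ x hxr hle
        rw [hev, hs]
        calc |(r.eval x - 1) - t * π.eval x| ≤ |r.eval x - 1| + t * |π.eval x| := by
              have h4 := abs_sub (r.eval x - 1) (t * π.eval x)
              rw [abs_mul, abs_of_pos ht] at h4; exact h4
        _ ≤ c + t * M := by
              nlinarith [abs_nonneg (π.eval x)]
        _ ≤ β := hβ1
      · rw [hev, hs]
        refine le_trans (improve ha ha1.le hM1 ?_ hwb hgt ht htM) (le_trans (by nlinarith) hβ2)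
        rw [← hs]; exact heb
  have h1 : errP a r' ≤ β := err_le ha ha1 r' hpoint
  have h2 : Lm m a ≤ errP a r' := Lm_le ha ha1 hr'deg
  rw [hLm] at h2
  linarith

lemma extremal_card {m : ℕ} {a : ℝ} (ha : 0 < a) (ha1 : a < 1) (hLm : Lm m a = a)
    {r : Polynomial ℝ} (hdeg : r.natDegree ≤ 2 * m + 1) (hbest : errP a r = a) :
    ∃ s : Finset ℝ, (↑s : Set ℝ) ⊆ {x ∈ X a | |r.eval x - Real.sign x| = a} ∧
      s.card = 2 * m + 3 := by
  set E := {x ∈ X a | |r.eval x - Real.sign x| = a} with hEdef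
  rcases Set.finite_or_infinite E with hE | hE
  · have hcard : 2 * m + 3 ≤ E.ncard := by
      by_contra hlt
      have hlt' : E.ncard ≤ 2 * m + 2 := by omega
      rw [hEdef] at hlt' hE
      exact extremal_card_aux ha ha1 hLm hdeg hbest hE hlt'
    obtain ⟨t, hts, htcard⟩ := Set.exists_subset_card_eq hcard
    have htfin : t.Finite := hE.subset hts
    refine ⟨htfin.toFinset, by simpa using hts, ?_⟩
    rw [← Set.ncard_eq_toFinset_card t htfin, htcard]
  · obtain ⟨t, hts, htfin, htcard⟩ := hE.exists_subset_ncard_eq (2 * m + 3)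
    refine ⟨htfin.toFinset, by simpa using hts, ?_⟩
    rw [← Set.ncard_eq_toFinset_card t htfin, htcard]

lemma best_unique {m : ℕ} {a : ℝ} (ha : 0 < a) (ha1 : a < 1) (hLm : Lm m a = a)
    {p q : Polynomial ℝ} (hp : p.natDegree ≤ 2 * m + 1) (hq : q.natDegree ≤ 2 * m + 1)
    (hpb : errP a p = a) (hqb : errP a q = a) : p = q := by
  obtain ⟨r, hrdeg, hrev⟩ : ∃ r : Polynomial ℝ, r.natDegree ≤ 2 * m + 1 ∧
      ∀ x, r.eval x = (p.eval x + q.eval x)/2 := by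
    refine ⟨Polynomial.C (1/2 : ℝ) * (p + q), ?_, fun x => by simp; ring⟩
    exact le_trans (Polynomial.natDegree_C_mul_le _ _)
      (le_trans (Polynomial.natDegree_add_le p q) (max_le hp hq))
  have hrb : errP a r = a := by
    apply le_antisymm
    · apply err_le ha ha1
      intro x hx
      have h1 := hpb ▸ le_err ha ha1 p hx
      have h2 := hqb ▸ le_err ha ha1 q hx
      have h3 := abs_add_le (p.eval x - Real.sign x) (q.eval x - Real.sign x)
      have h5 : r.eval x - Real.sign x =
          ((p.eval x - Real.sign x) + (q.eval x - Real.sign x))/2 := by rw [hrev]; ring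
      rw [h5, abs_div]
      have : |(2:ℝ)| = 2 := by norm_num
      rw [this]
      linarith
    · exact le_trans (le_of_eq hLm.symm) (Lm_le ha ha1 hrdeg)
  obtain ⟨s, hsE, hscard⟩ := extremal_card ha ha1 hLm hrdeg hrb
  have hzero : ∀ x ∈ s, (p - q).eval x = 0 := by
    intro x hxs
    obtain ⟨hxX, hxE⟩ := hsE hxs
    obtain ⟨h1l, h1r⟩ := abs_le.1 (hpb ▸ le_err ha ha1 p hxX)
    obtain ⟨h2l, h2r⟩ := abs_le.1 (hqb ▸ le_err ha ha1 q hxX)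
    have h5 : r.eval x - Real.sign x =
        ((p.eval x - Real.sign x) + (q.eval x - Real.sign x))/2 := by rw [hrev]; ring
    rw [h5] at hxE
    rw [Polynomial.eval_sub]
    rcases (abs_eq ha.le).1 hxE with h | h <;> linarith
  have : p - q = 0 := by
    apply Polynomial.eq_zero_of_natDegree_lt_card_of_eval_eq_zero' (p - q) s hzero
    calc (p - q).natDegree ≤ max p.natDegree q.natDegree := Polynomial.natDegree_sub_le p q
    _ ≤ 2 * m + 1 := max_le hp hq
    _ < 2 * m + 3 := by omega
    _ = s.card := hscard.symm
  exact sub_eq_zero.1 this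

lemma pm_odd {m : ℕ} {a : ℝ} (ha : 0 < a) (ha1 : a < 1) (hLm : Lm m a = a)
    {p : Polynomial ℝ} (hp : p.natDegree ≤ 2 * m + 1) (hpb : errP a p = a) :
    ∀ x : ℝ, p.eval (-x) = -p.eval x := by
  obtain ⟨q, hqdeg, hqev⟩ : ∃ q : Polynomial ℝ, q.natDegree ≤ 2 * m + 1 ∧
      ∀ x, q.eval x = -p.eval (-x) := by
    refine ⟨-(p.comp (-Polynomial.X)), ?_, fun x => by simp⟩
    rw [Polynomial.natDegree_neg]
    refine le_trans (Polynomial.natDegree_comp_le) ?_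
    have : (-Polynomial.X : Polynomial ℝ).natDegree = 1 := by
      rw [Polynomial.natDegree_neg, Polynomial.natDegree_X]
    rw [this, mul_one]
    exact hp
  have hqb : errP a q = a := by
    apply le_antisymm
    · apply err_le ha ha1
      intro x hx
      have hxn : -x ∈ X a := by
        rcases hx with h | h
        · exact Or.inr ⟨by linarith [h.2], by linarith [h.1]⟩
        · exact Or.inl ⟨by linarith [h.2], by linarith [h.1]⟩
      have h1 := hpb ▸ le_err ha ha1 p hxn
      rw [Real.sign_neg] at h1
      rw [hqev]
      calc |(-p.eval (-x)) - Real.sign x| = |p.eval (-x) - -Real.sign x| := by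
            rw [← abs_neg]; ring_nf
      _ ≤ a := h1
    · exact le_trans (le_of_eq hLm.symm) (Lm_le ha ha1 hqdeg)
  have hpq := best_unique ha ha1 hLm hp hqdeg hpb hqb
  intro x
  have h2 : p.eval x = q.eval x := by rw [hpq]
  rw [hqev] at h2
  linarith

lemma crit_of_interior {p : Polynomial ℝ} {σ lo hi x a : ℝ} (hx : x ∈ Ioo lo hi) (ha : 0 < a)
    (hmax : ∀ y ∈ Icc lo hi, |p.eval y - σ| ≤ a) (heq : |p.eval x - σ| = a) :
    p.derivative.eval x = 0 := by
  have hloc : IsLocalMax (fun y => ((p - Polynomial.C σ)^2).eval y) x := by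
    have hmem : Icc lo hi ∈ nhds x := Icc_mem_nhds hx.1 hx.2
    apply IsMaxOn.isLocalMax _ hmem
    intro y hy
    simp only [Polynomial.eval_pow, Polynomial.eval_sub, Polynomial.eval_C]
    have h1 : (p.eval y - σ)^2 ≤ a^2 := by
      rw [← sq_abs]
      exact pow_le_pow_left₀ (abs_nonneg _) (hmax y hy) 2
    have h2 : (p.eval x - σ)^2 = a^2 := by rw [← sq_abs, heq]
    rw [h2]; exact h1
  have hd := hloc.deriv_eq_zero
  rw [Polynomial.deriv] at hd
  have hder : ((p - Polynomial.C σ)^2).derivative =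
      Polynomial.C 2 * (p - Polynomial.C σ) * p.derivative := by
    rw [Polynomial.derivative_pow]
    simp [Polynomial.derivative_sub]
  rw [hder] at hd
  simp only [Polynomial.eval_mul, Polynomial.eval_C, Polynomial.eval_sub] at hd
  have hne : p.eval x - σ ≠ 0 := by
    intro h0; rw [h0, abs_zero] at heq; linarith
  rcases mul_eq_zero.1 hd with h | h
  · rcases mul_eq_zero.1 h with h' | h'
    · norm_num at h'
    · exact absurd h' hne
  · exact h

lemma gap_bound {m : ℕ} {a : ℝ} (ha : 0 < a) (ha1 : a < 1) (hLm : Lm m a = a)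
    {p : Polynomial ℝ} (hp : p.natDegree ≤ 2 * m + 1) (hpb : errP a p = a) :
    ∀ c ∈ Ioo (-a) a, |p.eval c| ≤ 1 + a := by
  have hodd := pm_odd ha ha1 hLm hp hpb
  have hp0 : p.eval 0 = 0 := by have := hodd 0; rw [neg_zero] at this; linarith
  have herr : ∀ x ∈ X a, |p.eval x - Real.sign x| ≤ a := by
    intro x hx; rw [← hpb]; exact le_err ha ha1 p hx
  have herrR : ∀ x ∈ Icc a 1, |p.eval x - 1| ≤ a := by
    intro x hx; have := herr x (Or.inr hx); rwa [sign_right ha hx] at this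
  have herrL : ∀ x ∈ Icc (-1:ℝ) (-a), |p.eval x + 1| ≤ a := by
    intro x hx; have := herr x (Or.inl hx); rw [sign_left ha hx] at this
    simpa using this
  have hpa : p.eval a ≤ 1 + a ∧ 1 - a ≤ p.eval a := by
    have := abs_le.1 (herrR a ⟨le_refl a, ha1.le⟩); constructor <;> linarith [this.1, this.2]
  intro c hc
  by_contra hgt
  push_neg at hgt
  -- find a critical point in Ioo 0 a
  obtain ⟨c', hc', hpc'⟩ : ∃ c' ∈ Ioo (0:ℝ) a, 1 + a < |p.eval c'| := by
    rcases lt_trichotomy c 0 with h | h | h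
    · refine ⟨-c, ⟨by linarith, by linarith [hc.1]⟩, ?_⟩
      rw [hodd c, abs_neg]; exact hgt
    · exfalso; rw [h, hp0, abs_zero] at hgt; linarith
    · exact ⟨c, ⟨h, hc.2⟩, hgt⟩
  obtain ⟨ξ, hξ, hξcrit⟩ : ∃ ξ ∈ Ioo (0:ℝ) a, p.derivative.eval ξ = 0 := by
    rcases le_or_gt 0 (p.eval c') with hsgn | hsgn
    · -- p.eval c' > 1 + a : use max
      rw [abs_of_nonneg hsgn] at hpc'
      obtain ⟨ξ, hξmem, hmax⟩ := (isCompact_Icc (a := (0:ℝ)) (b := a)).exists_isMaxOn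
        ⟨0, le_refl 0, ha.le⟩ p.continuous.continuousOn
      have hval : p.eval c' ≤ p.eval ξ := hmax ⟨hc'.1.le, hc'.2.le⟩
      have hξ0 : ξ ≠ 0 := by intro h0; rw [h0, hp0] at hval; linarith
      have hξa : ξ ≠ a := by intro h0; rw [h0] at hval; linarith [hpa.1]
      have hξIoo : ξ ∈ Ioo (0:ℝ) a :=
        ⟨lt_of_le_of_ne hξmem.1 (Ne.symm hξ0), lt_of_le_of_ne hξmem.2 hξa⟩
      refine ⟨ξ, hξIoo, ?_⟩
      have hloc : IsLocalMax (fun y => p.eval y) ξ :=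
        hmax.isLocalMax (Icc_mem_nhds hξIoo.1 hξIoo.2)
      have := hloc.deriv_eq_zero
      rwa [Polynomial.deriv] at this
    · -- p.eval c' < -(1+a) : use min
      rw [abs_of_neg hsgn] at hpc'
      obtain ⟨ξ, hξmem, hmin⟩ := (isCompact_Icc (a := (0:ℝ)) (b := a)).exists_isMinOn
        ⟨0, le_refl 0, ha.le⟩ p.continuous.continuousOn
      have hval : p.eval ξ ≤ p.eval c' := hmin ⟨hc'.1.le, hc'.2.le⟩
      have hξ0 : ξ ≠ 0 := by intro h0; rw [h0, hp0] at hval; linarith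
      have hξa : ξ ≠ a := by intro h0; rw [h0] at hval; linarith [hpa.2]
      have hξIoo : ξ ∈ Ioo (0:ℝ) a :=
        ⟨lt_of_le_of_ne hξmem.1 (Ne.symm hξ0), lt_of_le_of_ne hξmem.2 hξa⟩
      refine ⟨ξ, hξIoo, ?_⟩
      have hloc : IsLocalMin (fun y => p.eval y) ξ :=
        hmin.isLocalMin (Icc_mem_nhds hξIoo.1 hξIoo.2)
      have := hloc.deriv_eq_zero
      rwa [Polynomial.deriv] at this
  -- evenness of the derivative
  have hcompeq : p.comp (-Polynomial.X) = -p := by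
    apply Polynomial.funext
    intro x
    simp [hodd x]
  have heven : ∀ x : ℝ, p.derivative.eval (-x) = p.derivative.eval x := by
    intro x
    have hd := congrArg Polynomial.derivative hcompeq
    rw [Polynomial.derivative_comp, Polynomial.derivative_neg, Polynomial.derivative_X,
      Polynomial.derivative_neg] at hd
    have := congrArg (Polynomial.eval x) hd
    simp at this
    linarith
  -- interior extremal points are critical
  obtain ⟨s, hsE, hscard⟩ := extremal_card ha ha1 hLm hp hpb
  have habs : ∀ x ∈ X a, a ≤ |x| := by
    rintro x (hx | hx)
    · rw [abs_of_neg (by linarith [hx.2] : x < 0)]; linarith [hx.2]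
    · rw [abs_of_pos (by linarith [hx.1] : 0 < x)]; exact hx.1
  set s' := s \ ({-1, -a, a, 1} : Finset ℝ) with hs'def
  have hs'crit : ∀ x ∈ s', p.derivative.eval x = 0 := by
    intro x hxs'
    obtain ⟨hxs, hxne⟩ := Finset.mem_sdiff.1 hxs'
    simp only [Finset.mem_insert, Finset.mem_singleton, not_or] at hxne
    obtain ⟨hne1, hnea, hnea', hne1'⟩ := hxne
    obtain ⟨hxX, hxE⟩ := hsE hxs
    rcases hxX with hx | hx
    · have hIoo : x ∈ Ioo (-1:ℝ) (-a) :=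
        ⟨lt_of_le_of_ne hx.1 (Ne.symm hne1), lt_of_le_of_ne hx.2 hnea⟩
      refine crit_of_interior (σ := -1) hIoo ha (fun y hy => by simpa using herrL y hy) ?_
      rw [sign_left ha hx] at hxE
      simpa using hxE
    · have hIoo : x ∈ Ioo a 1 :=
        ⟨lt_of_le_of_ne hx.1 (Ne.symm hnea'), lt_of_le_of_ne hx.2 hne1'⟩
      refine crit_of_interior (σ := 1) hIoo ha herrR ?_
      rwa [sign_right ha hx] at hxE
  have hs'card : 2 * m - 1 ≤ s'.card := by
    have h1 : s.card ≤ s'.card + ({-1, -a, a, 1} : Finset ℝ).card :=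
      Finset.card_le_card_sdiff_add_card
    have h2 : ({-1, -a, a, 1} : Finset ℝ).card ≤ 4 := by
      have i1 := Finset.card_insert_le (-1:ℝ) {-a, a, 1}
      have i2 := Finset.card_insert_le (-a:ℝ) {a, 1}
      have i3 := Finset.card_insert_le (a:ℝ) {1}
      simp only [Finset.card_singleton] at *
      omega
    omega
  -- assemble the zero set
  have hξX : ξ ∉ s' := by
    intro hmem
    have := habs ξ (hsE (Finset.mem_sdiff.1 hmem).1).1
    rw [abs_of_pos hξ.1] at this
    linarith [hξ.2]
  have hξX' : -ξ ∉ s' := by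
    intro hmem
    have := habs (-ξ) (hsE (Finset.mem_sdiff.1 hmem).1).1
    rw [abs_neg, abs_of_pos hξ.1] at this
    linarith [hξ.2]
  have hξne : ξ ≠ -ξ := by
    intro h0
    have h1 : ξ = 0 := by linarith
    exact hξ.1.ne' h1
  set T := insert ξ (insert (-ξ) s') with hTdef
  have hTcard : s'.card + 2 ≤ T.card := by
    rw [hTdef, Finset.card_insert_of_notMem (by
      simp only [Finset.mem_insert]; push_neg; exact ⟨hξne, hξX⟩),
      Finset.card_insert_of_notMem hξX']
  have hTzero : ∀ x ∈ T, p.derivative.eval x = 0 := by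
    intro x hx
    rcases Finset.mem_insert.1 hx with h | h
    · rw [h]; exact hξcrit
    · rcases Finset.mem_insert.1 h with h' | h'
      · rw [h', heven]; exact hξcrit
      · exact hs'crit x h'
  have hderzero : p.derivative = 0 := by
    apply Polynomial.eq_zero_of_natDegree_lt_card_of_eval_eq_zero' _ T hTzero
    have hd1 : p.derivative.natDegree ≤ 2 * m := by
      have := Polynomial.natDegree_derivative_le p
      omega
    omega
  have hpC : p.natDegree = 0 := Polynomial.natDegree_eq_zero_of_derivative_eq_zero hderzero
  have hpconst := Polynomial.eq_C_of_natDegree_eq_zero hpC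
  have hpa0 : p.eval a = 0 := by
    rw [hpconst]
    rw [hpconst] at hp0
    simpa using hp0
  have hfin := herrR a ⟨le_refl a, ha1.le⟩
  rw [hpa0] at hfin
  rw [show |(0:ℝ) - 1| = 1 by norm_num] at hfin
  linarith

lemma levy_upper {m : ℕ} {a : ℝ} (ha : 0 < a) (ha1 : a < 1) (hLm : Lm m a = a)
    {p : Polynomial ℝ} (hp : p.natDegree ≤ 2 * m + 1) (hpb : errP a p = a) :
    sInf (levySet p) ≤ a := by
  have hgap := gap_bound ha ha1 hLm hp hpb
  have herr : ∀ x ∈ X a, |p.eval x - Real.sign x| ≤ a := by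
    intro x hx; rw [← hpb]; exact le_err ha ha1 p hx
  have herrR : ∀ x ∈ Icc a 1, |p.eval x - 1| ≤ a := by
    intro x hx; have := herr x (Or.inr hx); rwa [sign_right ha hx] at this
  have herrL : ∀ x ∈ Icc (-1:ℝ) (-a), |p.eval x + 1| ≤ a := by
    intro x hx; have := herr x (Or.inl hx); rw [sign_left ha hx] at this
    simpa using this
  have hmem : ∀ h : ℝ, a < h → h ∈ levySet p := by
    intro h hah
    refine ⟨by linarith, ?_⟩
    intro x hx
    constructor
    · rcases le_or_gt a x with hxa | hxa
      · have h2 := abs_le.1 (herrR x ⟨hxa, hx.2⟩)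
        have hs := (sign_mem (x - h)).2
        linarith
      · have hs : Real.sign (x - h) = -1 := Real.sign_of_neg (by linarith)
        have hb : -(1+a) ≤ p.eval x := by
          rcases le_or_gt x (-a) with h2 | h2
          · have := abs_le.1 (herrL x ⟨hx.1, h2⟩); linarith
          · have := abs_le.1 (hgap x ⟨h2, hxa⟩); linarith
        rw [hs]; linarith
    · rcases le_or_gt x (-a) with hxa | hxa
      · have h2 := abs_le.1 (herrL x ⟨hx.1, hxa⟩)
        have hs := (sign_mem (x + h)).1
        linarith
      · have hs : Real.sign (x + h) = 1 := Real.sign_of_pos (by linarith)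
        have hb : p.eval x ≤ 1 + a := by
          rcases lt_or_ge x a with h2 | h2
          · have := abs_le.1 (hgap x ⟨hxa, h2⟩); linarith
          · have := abs_le.1 (herrR x ⟨h2, hx.2⟩); linarith
        rw [hs]; linarith
  have hbdd : BddBelow (levySet p) := ⟨0, fun h hh => hh.1.le⟩
  by_contra hcon
  push_neg at hcon
  have := csInf_le hbdd (hmem (a + (sInf (levySet p) - a)/2) (by linarith))
  linarith

theorem extremal_poly_minimizes_levy' (m : ℕ) (a : ℝ) (ha : a ∈ Ioo (0 : ℝ) 1)
    (hfix : a = Lm m a)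
    (pm : Polynomial ℝ) (hdeg : pm.natDegree ≤ 2 * m + 1)
    (hext : sSup ((fun x => |pm.eval x - Real.sign x|) '' X a) = Lm m a) :
    ∀ q : Polynomial ℝ, q.natDegree ≤ 2 * m + 1 →
      levy Real.sign (fun x => pm.eval x) ≤ levy Real.sign (fun x => q.eval x) ∧
      (levy Real.sign (fun x => q.eval x) = levy Real.sign (fun x => pm.eval x) → q = pm) := by
  obtain ⟨ha0, ha1⟩ := ha
  have hLm : Lm m a = a := hfix.symm
  have hpb : errP a pm = a := by
    have : errP a pm = Lm m a := hext
    rw [this, hLm]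
  intro q hq
  have hpm_le : levy Real.sign (fun x => pm.eval x) ≤ a := by
    rw [levy_eq]; exact levy_upper ha0 ha1 hLm hdeg hpb
  have hpm_ge : a ≤ levy Real.sign (fun x => pm.eval x) := by
    rw [levy_eq]; exact levy_lower ha0 ha1 hfix hdeg
  have hq_ge : a ≤ levy Real.sign (fun x => q.eval x) := by
    rw [levy_eq]; exact levy_lower ha0 ha1 hfix hq
  refine ⟨by linarith, ?_⟩
  intro heq
  have hqa : sInf (levySet q) = a := by
    rw [← levy_eq, heq]; linarith
  -- q is also a best approximation on X a
  have hqR : ∀ x ∈ Icc a 1, |q.eval x - 1| ≤ a := by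
    have hIoc : ∀ x ∈ Ioc a 1, |q.eval x - 1| ≤ a := by
      intro x hx
      by_contra hcon
      push_neg at hcon
      set ε := min (|q.eval x - 1| - a) (x - a) with hεdef
      have hε : 0 < ε := lt_min (by linarith) (by linarith [hx.1])
      obtain ⟨h, hh, hhlt⟩ := Real.lt_sInf_add_pos (levySet_nonempty q) hε
      rw [hqa] at hhlt
      have h0 : 0 < h := hh.1
      have hhx : h < x := by
        have : ε ≤ x - a := min_le_right _ _
        linarith
      have h1 : h < 1 := lt_of_lt_of_le hhx hx.2
      have hb := (bounds_of_levy_mem h0 h1 hh.2).1 x ⟨hhx.le, hx.2⟩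
      have : ε ≤ |q.eval x - 1| - a := min_le_left _ _
      linarith
    have hcl : IsClosed {x : ℝ | |q.eval x - 1| ≤ a} :=
      isClosed_le (q.continuous.sub continuous_const).abs continuous_const
    have hcc := closure_minimal hIoc hcl
    rw [closure_Ioc (ne_of_lt ha1)] at hcc
    exact fun x hx => hcc hx
  have hqL : ∀ x ∈ Icc (-1:ℝ) (-a), |q.eval x + 1| ≤ a := by
    have hIco : ∀ x ∈ Ico (-1:ℝ) (-a), |q.eval x + 1| ≤ a := by
      intro x hx
      by_contra hcon
      push_neg at hcon
      set ε := min (|q.eval x + 1| - a) (-a - x) with hεdef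
      have hε : 0 < ε := lt_min (by linarith) (by linarith [hx.2])
      obtain ⟨h, hh, hhlt⟩ := Real.lt_sInf_add_pos (levySet_nonempty q) hε
      rw [hqa] at hhlt
      have h0 : 0 < h := hh.1
      have hhx : x < -h := by
        have : ε ≤ -a - x := min_le_right _ _
        linarith
      have h1 : h < 1 := by
        by_contra hcon2
        push_neg at hcon2
        have := hx.1
        linarith
      have hb := (bounds_of_levy_mem h0 h1 hh.2).2 x ⟨hx.1, hhx.le⟩
      have : ε ≤ |q.eval x + 1| - a := min_le_left _ _
      linarith
    have hcl : IsClosed {x : ℝ | |q.eval x + 1| ≤ a} :=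
      isClosed_le (q.continuous.add continuous_const).abs continuous_const
    have hcc := closure_minimal hIco hcl
    rw [closure_Ico (show (-1:ℝ) ≠ -a by intro hcon; have := neg_injective hcon; linarith)] at hcc
    exact fun x hx => hcc hx
  have hqb : errP a q = a := by
    apply le_antisymm
    · apply err_le ha0 ha1
      rintro x (hx | hx)
      · rw [sign_left ha0 hx]; simpa using hqL x hx
      · rw [sign_right ha0 hx]; exact hqR x hx
    · exact le_trans (le_of_eq hLm.symm) (Lm_le ha0 ha1 hq)
  exact best_unique ha0 ha1 hLm hq hdeg hqb hpb

/-- If `a = L_m(a)` then the extremal polynomial `p_m` for the uniform approximation of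
`sgn` on `X(a)` is the unique polynomial of degree at most `2m+1` minimizing the
Lévy-type distance `𝓛(sgn, p)`. -/
theorem extremal_poly_minimizes_levy (m : ℕ) (a : ℝ) (ha : a ∈ Ioo (0 : ℝ) 1)
    (hfix : a = Lm m a)
    (pm : Polynomial ℝ) (hdeg : pm.natDegree ≤ 2 * m + 1)
    (hext : sSup ((fun x => |pm.eval x - Real.sign x|) '' X a) = Lm m a) :
    ∀ q : Polynomial ℝ, q.natDegree ≤ 2 * m + 1 →
      levy Real.sign (fun x => pm.eval x) ≤ levy Real.sign (fun x => q.eval x) ∧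
      (levy Real.sign (fun x => q.eval x) = levy Real.sign (fun x => pm.eval x) → q = pm) := by
  exact extremal_poly_minimizes_levy' m a ha hfix pm hdeg hext
end
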